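/- Let each f_i be differentiable, convex and L-smooth, G convex, γ > 0, and let the matrices satisfy Assumption (A8). Let {(X^k, X̲^k, Y̲^k)} be generated by: X̲^{k+1} = D·X^k − γ(∇f(X^k) + Y̲^k); X^{k+1} = prox_{γg}(X̲^{k+1}); Y̲^{k+1} = Y̲^k + (1/γ)·C·X^{k+1}, with Y̲^0 = 0. Then for every k ≥ 0, every X = 1·xᵀ with x ∈ ℝ^d, and every Y ∈ ℝ^{m×d} with 1ᵀY = 0: φ(X^{k+1}, Y) ≤ φ(X, Y) + (1/γ)·⟨X^k − X^{k+1}, X^{k+1} − X⟩_D − ⟨Y̲^{k+1} − Y, X^{k+1} − X⟩ + (L/2)·‖X^{k+1} − X^k‖² − (1/γ)·‖X^{k+1}‖²_{I−C−D}, where φ(X,Y) = f(X) + g(X) + ⟨X, Y⟩. -/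

import Mathlib

noncomputable section

open Matrix Finset

/-- `ℝ^d` as a Euclidean (inner-product) space. -/
abbrev Vec (d : ℕ) := EuclideanSpace ℝ (Fin d)

/-- Interpret a plain tuple as a Euclidean vector. -/
def toVec {d : ℕ} (x : Fin d → ℝ) : Vec d := (WithLp.equiv 2 (Fin d → ℝ)).symm x

/-- Interpret a Euclidean vector as a plain tuple. -/
def ofVec {d : ℕ} (x : Vec d) : Fin d → ℝ := (WithLp.equiv 2 (Fin d → ℝ)) x

/-- The matrix `1 · xᵀ` whose rows all equal `x`. -/
def oneOuter (m : ℕ) {d : ℕ} (x : Vec d) : Matrix (Fin m) (Fin d) ℝ :=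
  Matrix.of fun _ j => ofVec x j

/-- `f(X) = ∑ i, f_i(x_i)`, where `x_i` is the `i`-th row of `X`. -/
def fMat {m d : ℕ} (f : Fin m → Vec d → ℝ) (X : Matrix (Fin m) (Fin d) ℝ) : ℝ :=
  ∑ i, f i (toVec (X i))

/-- `g(X) = ∑ i, G(x_i)`. -/
def gMat {m d : ℕ} (G : Vec d → ℝ) (X : Matrix (Fin m) (Fin d) ℝ) : ℝ :=
  ∑ i, G (toVec (X i))

/-- `∇f(X)`: the matrix whose `i`-th row is `∇f_i(x_i)`. -/
def gradMat {m d : ℕ} (gf : Fin m → Vec d → Vec d) (X : Matrix (Fin m) (Fin d) ℝ) :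
    Matrix (Fin m) (Fin d) ℝ :=
  Matrix.of fun i => ofVec (gf i (toVec (X i)))

/-- `F(x) = (1/m) ∑ i, f_i(x)`. -/
def Fbar {m d : ℕ} (f : Fin m → Vec d → ℝ) (x : Vec d) : ℝ :=
  (1 / (m : ℝ)) * ∑ i, f i x

/-- `gf` is the gradient field of `f`. -/
def IsGradient {d : ℕ} (f : Vec d → ℝ) (gf : Vec d → Vec d) : Prop :=
  ∀ x, HasGradientAt f (gf x) x

/-- `L`-smoothness: the gradient field is `L`-Lipschitz. -/
def LSmooth {d : ℕ} (L : ℝ) (gf : Vec d → Vec d) : Prop :=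
  ∀ x y, ‖gf x - gf y‖ ≤ L * ‖x - y‖

/-- `ξ` is a subgradient of `G` at `x`. -/
def IsSubgradientAt {d : ℕ} (G : Vec d → ℝ) (ξ x : Vec d) : Prop :=
  ∀ y, G x + (inner ℝ ξ (y - x) : ℝ) ≤ G y

/-- `p` is the proximal point `prox_{γ G}(z)`, i.e. a minimizer of
`y ↦ G(y) + ‖y − z‖²/(2γ)`. -/
def IsProx {d : ℕ} (G : Vec d → ℝ) (γ : ℝ) (z p : Vec d) : Prop :=
  ∀ y, G p + ‖p - z‖ ^ 2 / (2 * γ) ≤ G y + ‖y - z‖ ^ 2 / (2 * γ)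

/-- Apply a map `P : ℝ^d → ℝ^d` rowwise to a matrix (used for `prox_{γ g}`). -/
def rowsMap {m d : ℕ} (P : Vec d → Vec d) (Z : Matrix (Fin m) (Fin d) ℝ) :
    Matrix (Fin m) (Fin d) ℝ :=
  Matrix.of fun i => ofVec (P (toVec (Z i)))

/-- Frobenius inner product `⟨X, Y⟩ = trace(Xᵀ Y)`. -/
def frInner {n p : Type*} [Fintype n] [Fintype p] (X Y : Matrix n p ℝ) : ℝ :=
  Matrix.trace (Xᵀ * Y)

/-- Squared Frobenius norm. -/
def froSq {n p : Type*} [Fintype n] [Fintype p] (X : Matrix n p ℝ) : ℝ := frInner X X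

/-- Frobenius norm. -/
def fro {n p : Type*} [Fintype n] [Fintype p] (X : Matrix n p ℝ) : ℝ := Real.sqrt (froSq X)

/-- Weighted squared norm `‖X‖²_M = trace(Xᵀ M X)`. -/
def mnormSq {n p : Type*} [Fintype n] [Fintype p] (M : Matrix n n ℝ) (X : Matrix n p ℝ) : ℝ :=
  frInner X (M * X)

/-- Weighted inner product `⟨X, Y⟩_M = trace(Xᵀ M Y)`. -/
def minnerM {n p : Type*} [Fintype n] [Fintype p] (M : Matrix n n ℝ) (X Y : Matrix n p ℝ) : ℝ :=
  frInner X (M * Y)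

/-- The set of eigenvalues of a matrix. -/
def eigs {m : ℕ} (M : Matrix (Fin m) (Fin m) ℝ) : Set ℝ :=
  {r | ∃ v : Fin m → ℝ, v ≠ 0 ∧ M *ᵥ v = r • v}

/-- Largest eigenvalue. -/
def lmax {m : ℕ} (M : Matrix (Fin m) (Fin m) ℝ) : ℝ := sSup (eigs M)

/-- Smallest eigenvalue. -/
def lmin {m : ℕ} (M : Matrix (Fin m) (Fin m) ℝ) : ℝ := sInf (eigs M)

/-- Second smallest eigenvalue of a symmetric matrix whose null space is `span{1}`:
the smallest eigenvalue attained on the orthogonal complement of `1`. -/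
def lam2 {m : ℕ} (M : Matrix (Fin m) (Fin m) ℝ) : ℝ :=
  sInf {r | ∃ v : Fin m → ℝ, v ≠ 0 ∧ (∑ i, v i) = 0 ∧ M *ᵥ v = r • v}

/-- Spectral radius. -/
def specRad {m : ℕ} (M : Matrix (Fin m) (Fin m) ℝ) : ℝ := sSup ((fun r => |r|) '' eigs M)

/-- The null space of `C` is exactly `span{1}`. -/
def NullSpanOnes {m : ℕ} (C : Matrix (Fin m) (Fin m) ℝ) : Prop :=
  ∀ v : Fin m → ℝ, C *ᵥ v = 0 ↔ ∃ c : ℝ, v = fun _ => c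

/-- The averaging matrix `J = 1·1ᵀ/m`. -/
def Jmat (m : ℕ) : Matrix (Fin m) (Fin m) ℝ := Matrix.of fun _ _ => 1 / (m : ℝ)

/-- `φ(X,Y) = f(X) + g(X) + ⟨X, Y⟩`. -/
def phiFG {m d : ℕ} (f : Fin m → Vec d → ℝ) (G : Vec d → ℝ)
    (X Y : Matrix (Fin m) (Fin d) ℝ) : ℝ :=
  fMat f X + gMat G X + frInner X Y

section Aux17
open Topology Filter

lemma lineDeriv17 {d : ℕ} {f : Vec d → ℝ} {gf : Vec d → Vec d} (hg : IsGradient f gf)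
    (x v : Vec d) (t : ℝ) :
    HasDerivAt (fun s : ℝ => f (x + s • v)) (inner ℝ (gf (x + t • v)) v : ℝ) t := by
  have hc : HasDerivAt (fun s : ℝ => x + s • v) v t := by
    simpa using ((hasDerivAt_id t).smul_const v).const_add x
  have h2 := (hg (x + t • v)).hasFDerivAt.comp_hasDerivAt t hc
  simp [InnerProductSpace.toDual_apply_apply] at h2; exact h2

lemma convex_lb {d : ℕ} {f : Vec d → ℝ} {gf : Vec d → Vec d} (hg : IsGradient f gf)
    (hc : ConvexOn ℝ Set.univ f) (x y : Vec d) :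
    f x + (inner ℝ (gf x) (y - x) : ℝ) ≤ f y := by
  set v := y - x with hv
  have hline : ∀ t : ℝ, 0 < t → t ≤ 1 → f (x + t • v) ≤ (1 - t) * f x + t * f y := by
    intro t ht ht1
    have := hc.2 (Set.mem_univ x) (Set.mem_univ y) (by linarith : (0:ℝ) ≤ 1 - t)
      (le_of_lt ht) (by ring)
    have hxy : (1 - t) • x + t • y = x + t • v := by rw [hv]; module
    rwa [hxy] at this
  have hslope : Filter.Tendsto (slope (fun s : ℝ => f (x + s • v)) 0) (𝓝[≠] 0)
      (𝓝 (inner ℝ (gf x) v : ℝ)) := by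
    have h0 := lineDeriv17 hg x v 0
    simp only [zero_smul, add_zero] at h0
    exact hasDerivAt_iff_tendsto_slope.1 h0
  have hslope' := hslope.mono_left (nhdsWithin_mono 0 (by
    intro t ht; exact ne_of_gt ht : Set.Ioi (0:ℝ) ⊆ {(0:ℝ)}ᶜ))
  have hle : (inner ℝ (gf x) v : ℝ) ≤ f y - f x := by
    refine le_of_tendsto hslope' ?_
    filter_upwards [Ioc_mem_nhdsGT (by norm_num : (0:ℝ) < 1)] with t ht
    have h1 := hline t ht.1 ht.2
    have : slope (fun s : ℝ => f (x + s • v)) 0 t = (f (x + t • v) - f x) / t := by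
      simp [slope_def_field]
    rw [this]
    rw [div_le_iff₀ ht.1]
    nlinarith [ht.1]
  linarith

lemma descent {d : ℕ} {L : ℝ} {f : Vec d → ℝ} {gf : Vec d → Vec d} (hg : IsGradient f gf)
    (hs : LSmooth L gf) (x y : Vec d) :
    f y ≤ f x + (inner ℝ (gf x) (y - x) : ℝ) + L / 2 * ‖y - x‖ ^ 2 := by
  set v := y - x with hv
  set φ : ℝ → ℝ := fun t => f (x + t • v) - t * (inner ℝ (gf x) v : ℝ) - L * ‖v‖ ^ 2 * t ^ 2 / 2
    with hφ
  have hder : ∀ t : ℝ, HasDerivAt φ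
      ((inner ℝ (gf (x + t • v)) v : ℝ) - (inner ℝ (gf x) v : ℝ) - L * ‖v‖ ^ 2 * t) t := by
    intro t
    have h1 := lineDeriv17 hg x v t
    have h2 : HasDerivAt (fun s : ℝ => s * (inner ℝ (gf x) v : ℝ)) (inner ℝ (gf x) v : ℝ) t := by
      simpa using (hasDerivAt_id t).mul_const (inner ℝ (gf x) v : ℝ)
    have h3 : HasDerivAt (fun s : ℝ => L * ‖v‖ ^ 2 * s ^ 2 / 2) (L * ‖v‖ ^ 2 * t) t := by
      have := ((hasDerivAt_pow 2 t).const_mul (L * ‖v‖ ^ 2)).div_const 2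
      exact this.congr_deriv (by ring)
    exact (h1.sub h2).sub h3
  have hmono : AntitoneOn φ (Set.Icc 0 1) := by
    apply antitoneOn_of_deriv_nonpos (convex_Icc 0 1)
    · exact fun t _ => ((hder t).continuousAt).continuousWithinAt
    · exact fun t _ => ((hder t).differentiableAt).differentiableWithinAt
    · intro t ht
      rw [interior_Icc] at ht
      rw [(hder t).deriv]
      have hb : (inner ℝ (gf (x + t • v)) v : ℝ) - (inner ℝ (gf x) v : ℝ)
          = (inner ℝ (gf (x + t • v) - gf x) v : ℝ) := by rw [inner_sub_left]
      have h4 : (inner ℝ (gf (x + t • v) - gf x) v : ℝ) ≤ ‖gf (x + t • v) - gf x‖ * ‖v‖ :=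
        real_inner_le_norm _ _
      have h5 : ‖gf (x + t • v) - gf x‖ ≤ L * (t * ‖v‖) := by
        have := hs (x + t • v) x
        simpa [norm_smul, abs_of_pos ht.1, mul_assoc] using this
      have h6 : ‖gf (x + t • v) - gf x‖ * ‖v‖ ≤ L * (t * ‖v‖) * ‖v‖ :=
        mul_le_mul_of_nonneg_right h5 (norm_nonneg v)
      rw [hb]
      nlinarith [norm_nonneg v]
  have h01 := hmono (Set.mem_Icc.2 ⟨le_refl 0, by norm_num⟩)
    (Set.mem_Icc.2 ⟨by norm_num, le_refl 1⟩) (by norm_num)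
  have e0 : φ 0 = f x := by simp [hφ]
  have e1 : φ 1 = f y - (inner ℝ (gf x) v : ℝ) - L * ‖v‖ ^ 2 / 2 := by
    simp [hφ, hv]
  rw [e0, e1] at h01
  linarith

lemma prox_subgrad {d : ℕ} {G : Vec d → ℝ} (hG : ConvexOn ℝ Set.univ G) {γ : ℝ} (hγ : 0 < γ)
    {z p : Vec d} (hp : IsProx G γ z p) (y : Vec d) :
    G p + (inner ℝ ((1 / γ) • (z - p)) (y - p) : ℝ) ≤ G y := by
  have key : ∀ t : ℝ, 0 < t → t ≤ 1 →
      G p + (inner ℝ ((1 / γ) • (z - p)) (y - p) : ℝ) ≤ G y + t * (‖y - p‖ ^ 2 / (2 * γ)) := by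
    intro t ht ht1
    set w : Vec d := p + t • (y - p) with hw
    have h1 := hp w
    have h2 : G w ≤ (1 - t) * G p + t * G y := by
      have := hG.2 (Set.mem_univ p) (Set.mem_univ y) (by linarith : (0:ℝ) ≤ 1 - t)
        (le_of_lt ht) (by ring)
      have hxy : (1 - t) • p + t • y = w := by rw [hw]; module
      rwa [hxy] at this
    have h3 : ‖w - z‖ ^ 2 = ‖p - z‖ ^ 2 + 2 * (t * (inner ℝ (p - z) (y - p) : ℝ))
        + t ^ 2 * ‖y - p‖ ^ 2 := by
      have hwz : w - z = (p - z) + t • (y - p) := by rw [hw]; module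
      rw [hwz, norm_add_sq_real, real_inner_smul_right, norm_smul]
      simp [mul_pow, sq_abs]
    have hip : (inner ℝ ((1 / γ) • (z - p)) (y - p) : ℝ)
        = -(inner ℝ (p - z) (y - p) : ℝ) / γ := by
      rw [real_inner_smul_left]
      have : (z - p : Vec d) = -(p - z) := by module
      rw [this, inner_neg_left]
      field_simp
    rw [hip]
    set a : ℝ := (inner ℝ (p - z) (y - p) : ℝ) with ha
    set B : ℝ := ‖y - p‖ ^ 2 with hB
    have hγ' : (0:ℝ) < 2 * γ := by linarith
    rw [h3] at h1
    have e : (‖p - z‖ ^ 2 + 2 * (t * a) + t ^ 2 * B) / (2 * γ) - ‖p - z‖ ^ 2 / (2 * γ)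
        = 2 * t * a / (2 * γ) + t ^ 2 * B / (2 * γ) := by field_simp; ring
    have hR : G p - G w ≤ 2 * t * a / (2 * γ) + t ^ 2 * B / (2 * γ) := by linarith
    have h2' : t * (G p - G y) ≤ G p - G w := by nlinarith
    have hRt : 2 * t * a / (2 * γ) + t ^ 2 * B / (2 * γ) = t * (a / γ + t * (B / (2 * γ))) := by
      field_simp
    have hfin : t * (G p - G y) ≤ t * (a / γ + t * (B / (2 * γ))) := by
      rw [← hRt]; linarith
    have := (mul_le_mul_iff_right₀ ht).1 hfin
    have hgoal : G p - G y ≤ a / γ + t * (B / (2 * γ)) := this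
    have : -a / γ = -(a / γ) := by ring
    linarith [hgoal]
  have htend : Filter.Tendsto (fun t : ℝ => G y + t * (‖y - p‖ ^ 2 / (2 * γ))) (𝓝[>] 0)
      (𝓝 (G y)) := by
    have : Filter.Tendsto (fun t : ℝ => G y + t * (‖y - p‖ ^ 2 / (2 * γ))) (𝓝 0) (𝓝 (G y)) := by
      have hcont : Continuous (fun t : ℝ => G y + t * (‖y - p‖ ^ 2 / (2 * γ))) := by continuity
      simpa using hcont.tendsto (0:ℝ)
    exact this.mono_left nhdsWithin_le_nhds
  refine ge_of_tendsto htend ?_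
  filter_upwards [Ioc_mem_nhdsGT (by norm_num : (0:ℝ) < 1)] with t ht
  exact key t ht.1 ht.2


section MatLemmas
variable {m d : ℕ}

lemma frInner_eq_sum (X Y : Matrix (Fin m) (Fin d) ℝ) :
    frInner X Y = ∑ i, ∑ j, X i j * Y i j := by
  unfold frInner Matrix.trace
  simp only [Matrix.diag, Matrix.mul_apply, Matrix.transpose_apply]
  exact Finset.sum_comm

lemma toVec_inner (a b : Fin d → ℝ) : (inner ℝ (toVec a) (toVec b) : ℝ) = ∑ j, a j * b j := by
  simp [toVec, PiLp.inner_apply, RCLike.inner_apply, WithLp.equiv_symm_apply, mul_comm]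

lemma frInner_rows (X Y : Matrix (Fin m) (Fin d) ℝ) :
    frInner X Y = ∑ i, (inner ℝ (toVec (X i)) (toVec (Y i)) : ℝ) := by
  rw [frInner_eq_sum]; simp [toVec_inner]

lemma toVec_row_sub (A B : Matrix (Fin m) (Fin d) ℝ) (i : Fin m) :
    toVec ((A - B) i) = toVec (A i) - toVec (B i) := rfl

lemma frInner_comm (X Y : Matrix (Fin m) (Fin d) ℝ) : frInner X Y = frInner Y X := by
  simp [frInner_eq_sum, mul_comm]

lemma frInner_add_left (X Y Z : Matrix (Fin m) (Fin d) ℝ) :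
    frInner (X + Y) Z = frInner X Z + frInner Y Z := by
  simp [frInner_eq_sum, Matrix.add_apply, add_mul, Finset.sum_add_distrib]

lemma frInner_sub_left (X Y Z : Matrix (Fin m) (Fin d) ℝ) :
    frInner (X - Y) Z = frInner X Z - frInner Y Z := by
  simp [frInner_eq_sum, Matrix.sub_apply, sub_mul, Finset.sum_sub_distrib]

lemma frInner_sub_right (X Y Z : Matrix (Fin m) (Fin d) ℝ) :
    frInner X (Y - Z) = frInner X Y - frInner X Z := by
  simp [frInner_eq_sum, Matrix.sub_apply, mul_sub, Finset.sum_sub_distrib]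

lemma frInner_smul_left (c : ℝ) (X Y : Matrix (Fin m) (Fin d) ℝ) :
    frInner (c • X) Y = c * frInner X Y := by
  simp [frInner_eq_sum, Matrix.smul_apply, Finset.mul_sum, mul_assoc, smul_eq_mul]

lemma frInner_zero_right (X : Matrix (Fin m) (Fin d) ℝ) : frInner X 0 = 0 := by
  simp [frInner]

lemma frInner_mul (M : Matrix (Fin m) (Fin m) ℝ) (A B : Matrix (Fin m) (Fin d) ℝ) :
    frInner (M * A) B = frInner A (Mᵀ * B) := by
  unfold frInner
  rw [Matrix.transpose_mul, Matrix.mul_assoc]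

lemma mul_oneOuter_eq_zero {M : Matrix (Fin m) (Fin m) ℝ}
    (hM : M *ᵥ (fun _ => (1:ℝ)) = 0) (x : Vec d) : M * oneOuter m x = 0 := by
  ext i j
  have h := congrFun hM i
  simp only [Matrix.mulVec, dotProduct, mul_one, Pi.zero_apply] at h
  simp [Matrix.mul_apply, oneOuter, ← Finset.sum_mul, h]

lemma froSq_rows (Z : Matrix (Fin m) (Fin d) ℝ) : froSq Z = ∑ i, ‖toVec (Z i)‖ ^ 2 := by
  rw [froSq, frInner_rows]
  exact Finset.sum_congr rfl (fun i _ => real_inner_self_eq_norm_sq _)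
end MatLemmas
end Aux17

/-- basic inequality I, composite case: under Assumption (A8), for every
`k`, every consensual `X = 1·xᵀ` and every `Y` with `1ᵀY = 0`, the iterates satisfy the
stated bound on `φ(X^{k+1}, Y)`. -/
theorem statement_17
    (m d : ℕ) (hm : 0 < m) (hd : 0 < d) (L γ : ℝ) (hγ : 0 < γ)
    (f : Fin m → Vec d → ℝ) (gf : Fin m → Vec d → Vec d)
    (hgrad : ∀ i, IsGradient (f i) (gf i))
    (hconv : ∀ i, ConvexOn ℝ Set.univ (f i))
    (hsmooth : ∀ i, LSmooth L (gf i))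
    (G : Vec d → ℝ) (hG : ConvexOn ℝ Set.univ G)
    (P : Vec d → Vec d) (hP : ∀ z, IsProx G γ z (P z))
    (C D : Matrix (Fin m) (Fin m) ℝ)
    -- Assumption (A8) (with `B = I`)
    (hDs : D.IsSymm) (hD1 : (∑ i, ∑ j, D i j) = (m : ℝ))
    (hCpsd : C.PosSemidef) (hCnull : NullSpanOnes C)
    (hDpd : D.PosDef) (hkey : ((1 - (1 / 2 : ℝ) • C) - D).PosSemidef)
    -- the algorithm
    (X Xu Yu : ℕ → Matrix (Fin m) (Fin d) ℝ)
    (hXu : ∀ k, Xu (k + 1) = D * X k - γ • (gradMat gf (X k) + Yu k))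
    (hXk : ∀ k, X (k + 1) = rowsMap P (Xu (k + 1)))
    (hYu : ∀ k, Yu (k + 1) = Yu k + (1 / γ) • (C * X (k + 1)))
    (hYu0 : Yu 0 = 0) :
    ∀ (k : ℕ) (x : Vec d) (Y : Matrix (Fin m) (Fin d) ℝ), (∀ j, ∑ i, Y i j = 0) →
      phiFG f G (X (k + 1)) Y ≤
        phiFG f G (oneOuter m x) Y
          + (1 / γ) * minnerM D (X k - X (k + 1)) (X (k + 1) - oneOuter m x)
          - frInner (Yu (k + 1) - Y) (X (k + 1) - oneOuter m x)
          + (L / 2) * froSq (X (k + 1) - X k)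
          - (1 / γ) * mnormSq (1 - C - D) (X (k + 1)) := by
  -- facts about the all-ones vector
  have hCones : C *ᵥ (fun _ => (1:ℝ)) = 0 := (hCnull _).2 ⟨1, rfl⟩
  have hexp : ((1 - (1/2:ℝ) • C) - D) *ᵥ (fun _ => (1:ℝ))
      = (fun _ => (1:ℝ)) - (1/2:ℝ) • (C *ᵥ (fun _ => (1:ℝ))) - D *ᵥ (fun _ => (1:ℝ)) := by
    rw [Matrix.sub_mulVec, Matrix.sub_mulVec, Matrix.one_mulVec, Matrix.smul_mulVec]
  have hEones : ((1 - (1/2:ℝ) • C) - D) *ᵥ (fun _ => (1:ℝ)) = 0 := by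
    apply (hkey.dotProduct_mulVec_zero_iff _).1
    rw [hexp, hCones]
    simp only [smul_zero, sub_zero, star_trivial]
    have : (fun _ => (1:ℝ)) ⬝ᵥ ((fun _ => (1:ℝ)) - D *ᵥ (fun _ => (1:ℝ)))
        = (m : ℝ) - ∑ i, ∑ j, D i j := by
      simp [dotProduct, Matrix.mulVec, Finset.sum_sub_distrib]
    rw [this, hD1, sub_self]
  have hDones : D *ᵥ (fun _ => (1:ℝ)) = fun _ => (1:ℝ) := by
    rw [hexp, hCones] at hEones
    simp only [smul_zero, sub_zero] at hEones
    exact (sub_eq_zero.1 hEones).symm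
  have hMones : ((1 - C - D) : Matrix (Fin m) (Fin m) ℝ) *ᵥ (fun _ => (1:ℝ)) = 0 := by
    rw [Matrix.sub_mulVec, Matrix.sub_mulVec, Matrix.one_mulVec, hCones, hDones]
    simp
  -- symmetry facts
  have hCt : Cᵀ = C := by
    have h := hCpsd.1
    ext i j
    have := congrFun (congrFun h i) j
    simpa using this
  have hMt : ((1 - C - D) : Matrix (Fin m) (Fin m) ℝ)ᵀ = 1 - C - D := by
    rw [Matrix.transpose_sub, Matrix.transpose_sub, Matrix.transpose_one, hCt, hDs.eq]
  intro k x Y _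
  have hMXb : ((1 - C - D) : Matrix (Fin m) (Fin m) ℝ) * oneOuter m x = 0 :=
    mul_oneOuter_eq_zero hMones x
  -- row identifications
  have hprow : ∀ i, toVec (X (k+1) i) = P (toVec (Xu (k+1) i)) := by
    intro i; rw [hXk k]; exact Equiv.symm_apply_apply _ _
  have hXbrow : ∀ i : Fin m, toVec (oneOuter m x i) = x := by
    intro i; exact Equiv.symm_apply_apply _ _
  have hgrow : ∀ (Z : Matrix (Fin m) (Fin d) ℝ) (i : Fin m),
      toVec (gradMat gf Z i) = gf i (toVec (Z i)) := by
    intro Z i; exact Equiv.symm_apply_apply _ _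
  -- step g
  have step_g : gMat G (X (k+1)) ≤ gMat G (oneOuter m x)
      + (1/γ) * frInner (Xu (k+1) - X (k+1)) (X (k+1) - oneOuter m x) := by
    have hrow : ∀ i : Fin m, G (toVec (X (k+1) i)) ≤ G (toVec (oneOuter m x i))
        + (1/γ) * (inner ℝ (toVec ((Xu (k+1) - X (k+1)) i))
            (toVec ((X (k+1) - oneOuter m x) i)) : ℝ) := by
      intro i
      have h := prox_subgrad hG hγ (hP (toVec (Xu (k+1) i))) x
      rw [real_inner_smul_left] at h
      rw [toVec_row_sub, toVec_row_sub, hprow i, hXbrow i]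
      have hswap : (inner ℝ (toVec (Xu (k+1) i) - P (toVec (Xu (k+1) i)))
          (P (toVec (Xu (k+1) i)) - x) : ℝ)
          = -(inner ℝ (toVec (Xu (k+1) i) - P (toVec (Xu (k+1) i)))
              (x - P (toVec (Xu (k+1) i))) : ℝ) := by
        rw [← inner_neg_right]; congr 1; abel
      rw [hswap]
      have h1γ : 0 < 1/γ := by positivity
      nlinarith [h]
    have := Finset.sum_le_sum (fun i (_ : i ∈ Finset.univ) => hrow i)
    rw [Finset.sum_add_distrib, ← Finset.mul_sum] at this
    rw [gMat, gMat, frInner_rows]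
    exact this
  -- step f
  have step_f : fMat f (X (k+1)) ≤ fMat f (oneOuter m x)
      + frInner (gradMat gf (X k)) (X (k+1) - oneOuter m x)
      + (L/2) * froSq (X (k+1) - X k) := by
    have hrow : ∀ i : Fin m, f i (toVec (X (k+1) i)) ≤ f i (toVec (oneOuter m x i))
        + (inner ℝ (toVec (gradMat gf (X k) i)) (toVec ((X (k+1) - oneOuter m x) i)) : ℝ)
        + L/2 * ‖toVec ((X (k+1) - X k) i)‖ ^ 2 := by
      intro i
      have hdes := descent (hgrad i) (hsmooth i) (toVec (X k i)) (toVec (X (k+1) i))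
      have hcl := convex_lb (hgrad i) (hconv i) (toVec (X k i)) x
      rw [toVec_row_sub, toVec_row_sub, hXbrow i, hgrow (X k) i]
      have hsplit : (inner ℝ (gf i (toVec (X k i))) (toVec (X (k+1) i) - toVec (X k i)) : ℝ)
          - (inner ℝ (gf i (toVec (X k i))) (x - toVec (X k i)) : ℝ)
          = (inner ℝ (gf i (toVec (X k i))) (toVec (X (k+1) i) - x) : ℝ) := by
        rw [← inner_sub_right]; congr 1; abel
      linarith
    have := Finset.sum_le_sum (fun i (_ : i ∈ Finset.univ) => hrow i)
    rw [Finset.sum_add_distrib, Finset.sum_add_distrib, ← Finset.mul_sum] at this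
    rw [fMat, fMat, frInner_rows, froSq_rows]
    exact this
  -- algebraic identity
  have h1 : gradMat gf (X k) = (1/γ) • (D * X k - Xu (k+1)) - Yu k := by
    rw [hXu k, sub_sub_cancel, smul_smul]
    rw [one_div, inv_mul_cancel₀ (ne_of_gt hγ), one_smul]
    abel
  have hV : gradMat gf (X k) + (1/γ) • (Xu (k+1) - X (k+1)) + Y
      = (1/γ) • (D * (X k - X (k+1))) - (1/γ) • ((1 - C - D) * X (k+1)) - (Yu (k+1) - Y) := by
    rw [h1, hYu k, Matrix.mul_sub, Matrix.sub_mul, Matrix.sub_mul, Matrix.one_mul]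
    module
  have alg : frInner (gradMat gf (X k) + (1/γ) • (Xu (k+1) - X (k+1)) + Y)
        (X (k+1) - oneOuter m x)
      = (1/γ) * minnerM D (X k - X (k+1)) (X (k+1) - oneOuter m x)
        - frInner (Yu (k+1) - Y) (X (k+1) - oneOuter m x)
        - (1/γ) * mnormSq (1 - C - D) (X (k+1)) := by
    rw [hV, frInner_sub_left, frInner_sub_left, frInner_smul_left, frInner_smul_left,
      frInner_mul D, hDs.eq, frInner_mul (1 - C - D), hMt]
    have e2 : frInner (X (k+1)) ((1 - C - D) * (X (k+1) - oneOuter m x))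
        = mnormSq (1 - C - D) (X (k+1)) := by
      rw [Matrix.mul_sub, frInner_sub_right, hMXb, frInner_zero_right, mnormSq]
      ring
    rw [e2, minnerM]
    ring
  have hsplit : frInner (gradMat gf (X k) + (1/γ) • (Xu (k+1) - X (k+1)) + Y)
        (X (k+1) - oneOuter m x)
      = frInner (gradMat gf (X k)) (X (k+1) - oneOuter m x)
        + (1/γ) * frInner (Xu (k+1) - X (k+1)) (X (k+1) - oneOuter m x)
        + frInner Y (X (k+1) - oneOuter m x) := by
    rw [frInner_add_left, frInner_add_left, frInner_smul_left]
  have hYsplit : frInner Y (X (k+1) - oneOuter m x)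
      = frInner (X (k+1)) Y - frInner (oneOuter m x) Y := by
    rw [frInner_comm, frInner_sub_left]
  rw [hsplit] at alg
  rw [phiFG, phiFG]
  linarith
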